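/- Let Φ be a Laurent polynomial over 𝔽_p in the first d−1 variables with at least two nonzero coefficients, and write Φ = X^{−a}·Φ̃ where a ∈ ℕ^{d−1} × {0} and Φ̃ is an ordinary polynomial in 𝔽_p[Y_1,…,Y_{d−1}] not divisible by any variable Y_i. Then the quotient ring R_d/⟨X_d − Φ⟩ of the Laurent polynomial ring R_d = 𝔽_p[X_1^{±1},…,X_d^{±1}] by the principal ideal generated by X_d − Φ is isomorphic, as a ring, to the localization of 𝔽_p[Y_1,…,Y_{d−1}] at the multiplicative submonoid generated by {Y_1,…,Y_{d−1}, Φ̃}. -/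

import Mathlib

/-!
In `R_d/⟨X_d − Φ⟩` the class of `X_d` is that of `Φ = X^{-a} Φ̃`, so `X_d` is redundant as a
generator, while `Φ̃ = X^a X_d` becomes a unit. Hence `X_i ↦ Y_i` (`i < d`), `X_d ↦ Y^{-a} Φ̃`
defines a map to the localization that kills `X_d − Φ`, and `Y_i ↦ X_i` extends to the
localization because `X_i` and `Φ̃` are units in the quotient. Both composites fix generators, so
they are the identity; the only computation is that `X^{-a}` is a product of powers of the first
`d − 1` variables, since `a_d = 0`.
-/

open AddMonoidAlgebra Multiplicative

noncomputable section

section LaurentMonomials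

variable {ι : Type*} [Fintype ι] {k : Type*} [CommSemiring k] {A : Type*} [CommSemiring A]
  [Algebra k A]

theorem isUnit_single_one {G : Type*} [AddGroup G] (g : G) : IsUnit (single g 1 : k[G]) :=
  ((of k G).toHomUnits (ofAdd g)).isUnit

variable (k) in
def laurentLift (u : ι → Aˣ) : k[ι → ℤ] →ₐ[k] A :=
  lift k A (ι → ℤ) ((Units.coeHom A).comp
    (MonoidHom.mk' (fun m => ∏ j, u j ^ m.toAdd j)
      (fun m m' => by simp only [toAdd_mul, Pi.add_apply, zpow_add, Finset.prod_mul_distrib])))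

theorem laurentLift_single_one (u : ι → Aˣ) (m : ι → ℤ) :
    laurentLift k u (single m 1) = ↑(∏ j, u j ^ m j) := by
  simp [laurentLift]

variable [DecidableEq ι]

theorem laurentLift_var (u : ι → Aˣ) (j : ι) :
    laurentLift k u (single (Pi.single j 1) 1) = u j := by
  simp [laurentLift_single_one, Pi.single_apply]

theorem ofAdd_eq_prod_zpow_single (m : ι → ℤ) :
    ofAdd m = ∏ j, ofAdd (Pi.single j (1 : ℤ)) ^ m j := by
  conv_lhs => rw [← Finset.univ_sum_single m]
  simp only [ofAdd_sum, ← ofAdd_zsmul, ← Pi.single_smul, smul_eq_mul, mul_one]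

variable (k) in
def laurentVar (j : ι) : k[ι → ℤ]ˣ :=
  (of k (ι → ℤ)).toHomUnits (ofAdd (Pi.single j 1))

theorem prod_laurentVar_zpow (m : ι → ℤ) :
    ((∏ j, laurentVar k j ^ m j : k[ι → ℤ]ˣ) : k[ι → ℤ]) = single m 1 := by
  simp only [laurentVar, ← map_zpow, ← map_prod, ← ofAdd_eq_prod_zpow_single]
  rfl

theorem map_single_one_eq_prod {F M : Type*} [CommMonoid M] [FunLike F k[ι → ℤ] M]
    [MonoidHomClass F k[ι → ℤ] M] (φ : F) (m : ι → ℤ) :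
    φ (single m 1) = ↑(∏ j, Units.map (φ : k[ι → ℤ] →* M) (laurentVar k j) ^ m j) := by
  rw [← prod_laurentVar_zpow, ← MonoidHom.coe_coe φ, ← Units.coe_map, map_prod]
  simp only [map_zpow]

theorem laurent_algHom_ext {φ ψ : k[ι → ℤ] →ₐ[k] A}
    (h : ∀ j, φ (single (Pi.single j 1) 1) = ψ (single (Pi.single j 1) 1)) : φ = ψ := by
  refine algHom_ext (fun m => ?_) (Subsingleton.elim _ _)
  have hvar : ∀ j, Units.map (φ : k[ι → ℤ] →* A) (laurentVar k j) =
      Units.map (ψ : k[ι → ℤ] →* A) (laurentVar k j) := fun j => Units.ext (h j)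
  rw [map_single_one_eq_prod φ, map_single_one_eq_prod ψ]
  simp only [hvar]

end LaurentMonomials

def Localization.unitOfMem {R : Type*} [CommSemiring R] {M : Submonoid R} {x : R}
    (hx : x ∈ M) : (Localization M)ˣ :=
  (IsLocalization.map_units (Localization M) ⟨x, hx⟩).unit

theorem Localization.coe_unitOfMem {R : Type*} [CommSemiring R] {M : Submonoid R} {x : R}
    (hx : x ∈ M) : (unitOfMem hx : Localization M) = algebraMap R (Localization M) x :=
  IsUnit.unit_spec _

section

variable {k : Type*} [CommRing k] {n : ℕ}

def snocZeroExp : (Fin n →₀ ℕ) →+ (Fin (n + 1) → ℤ) where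
  toFun v := Fin.snoc (fun i => (v i : ℤ)) 0
  map_zero' := by ext j; refine Fin.lastCases ?_ (fun i => ?_) j <;> simp
  map_add' v w := by ext j; refine Fin.lastCases ?_ (fun i => ?_) j <;> simp

variable (k n) in
def polyToLaurent : MvPolynomial (Fin n) k →ₐ[k] k[Fin (n + 1) → ℤ] :=
  mapDomainAlgHom k k snocZeroExp

theorem polyToLaurent_X (i : Fin n) :
    polyToLaurent k n (MvPolynomial.X i) = single (Pi.single i.castSucc 1) 1 := by
  have hexp : snocZeroExp (Finsupp.single i 1) = Pi.single i.castSucc (1 : ℤ) := by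
    ext j
    refine Fin.lastCases ?_ (fun i' => ?_) j <;>
      simp [snocZeroExp, Pi.single_apply, Finsupp.single_apply, eq_comm]
  rw [polyToLaurent, MvPolynomial.X, ← MvPolynomial.single_eq_monomial, mapDomainAlgHom_apply,
    mapDomain_single, hexp]

variable (Φt : MvPolynomial (Fin n) k) (a : Fin (n + 1) → ℤ)

abbrev genByVarsAnd : Submonoid (MvPolynomial (Fin n) k) :=
  Submonoid.closure (insert Φt (Set.range MvPolynomial.X))

abbrev relationIdeal : Ideal k[Fin (n + 1) → ℤ] :=
  Ideal.span {single (Pi.single (Fin.last n) 1) 1 - single (-a) 1 * polyToLaurent k n Φt}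

local notation "Q" => k[Fin (n + 1) → ℤ] ⧸ relationIdeal Φt a

local notation "L" => Localization (genByVarsAnd Φt)

theorem X_mem_genByVarsAnd (i : Fin n) : MvPolynomial.X i ∈ genByVarsAnd Φt :=
  Submonoid.subset_closure (Set.mem_insert_of_mem _ ⟨i, rfl⟩)

theorem mem_genByVarsAnd_self : Φt ∈ genByVarsAnd Φt :=
  Submonoid.subset_closure (Set.mem_insert _ _)

def laurentToLocalization : k[Fin (n + 1) → ℤ] →ₐ[k] L :=
  laurentLift k (Fin.snoc (fun i => Localization.unitOfMem (X_mem_genByVarsAnd Φt i))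
    (Localization.unitOfMem (mem_genByVarsAnd_self Φt) *
      ∏ i, Localization.unitOfMem (X_mem_genByVarsAnd Φt i) ^ (-a (Fin.castSucc i))))

theorem laurentToLocalization_comp_polyToLaurent :
    (laurentToLocalization Φt a).comp (polyToLaurent k n) =
      IsScalarTower.toAlgHom k (MvPolynomial (Fin n) k) L := by
  refine MvPolynomial.algHom_ext fun i => ?_
  simp [laurentToLocalization, polyToLaurent_X, laurentLift_var, Localization.coe_unitOfMem]

theorem laurentToLocalization_last :
    laurentToLocalization Φt a (single (Pi.single (Fin.last n) 1) 1) =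
      algebraMap _ L Φt *
        ↑(∏ i, Localization.unitOfMem (X_mem_genByVarsAnd Φt i) ^ (-a (Fin.castSucc i))) := by
  simp [laurentToLocalization, laurentLift_var, Localization.coe_unitOfMem]

theorem laurentToLocalization_relation (ha : a (Fin.last n) = 0) :
    laurentToLocalization Φt a (single (Pi.single (Fin.last n) 1) 1) =
      laurentToLocalization Φt a (single (-a) 1 * polyToLaurent k n Φt) := by
  rw [map_mul, ← AlgHom.comp_apply, laurentToLocalization_comp_polyToLaurent,
    laurentToLocalization_last]
  simp [laurentToLocalization, laurentLift_single_one, Fin.prod_univ_castSucc, ha, mul_comm]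

theorem mk_relation :
    Ideal.Quotient.mk (relationIdeal Φt a) (single (Pi.single (Fin.last n) 1) 1) =
      Ideal.Quotient.mk (relationIdeal Φt a) (single (-a) 1 * polyToLaurent k n Φt) :=
  Ideal.Quotient.eq.mpr (Ideal.subset_span rfl)

theorem mk_single_neg (ha : a (Fin.last n) = 0) :
    Ideal.Quotient.mk (relationIdeal Φt a) (single (-a) 1) =
      ↑(∏ i : Fin n,
        Units.map (Ideal.Quotient.mk (relationIdeal Φt a) : k[Fin (n + 1) → ℤ] →* Q)
          (laurentVar k i.castSucc) ^ (-a i.castSucc)) := by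
  rw [map_single_one_eq_prod, Fin.prod_univ_castSucc]
  simp only [Pi.neg_apply, ha, neg_zero, zpow_zero, mul_one]

theorem isUnit_mk_polyToLaurent (s : genByVarsAnd Φt) :
    IsUnit (((Ideal.Quotient.mkₐ k (relationIdeal Φt a)).comp (polyToLaurent k n)) s) := by
  obtain ⟨s, hs⟩ := s
  refine (Submonoid.closure_le (S := (IsUnit.submonoid _).comap
    ((Ideal.Quotient.mkₐ k (relationIdeal Φt a)).comp (polyToLaurent k n)))).mpr ?_ hs
  refine Set.insert_subset_iff.mpr ⟨?_, Set.range_subset_iff.mpr fun i => ?_⟩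
  · have hΦt : polyToLaurent k n Φt = single a 1 * (single (-a) 1 * polyToLaurent k n Φt) := by
      rw [← mul_assoc, single_mul_single, add_neg_cancel, mul_one, ← one_def, one_mul]
    show IsUnit (Ideal.Quotient.mk (relationIdeal Φt a) (polyToLaurent k n Φt))
    rw [hΦt, map_mul, ← mk_relation]
    exact ((isUnit_single_one a).map _).mul ((isUnit_single_one _).map _)
  · show IsUnit (Ideal.Quotient.mk (relationIdeal Φt a) (polyToLaurent k n (MvPolynomial.X i)))
    rw [polyToLaurent_X]
    exact (isUnit_single_one _).map _

variable {a} in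
def quotientToLocalization (ha : a (Fin.last n) = 0) : Q →ₐ[k] L :=
  Ideal.Quotient.liftₐ _ (laurentToLocalization Φt a) fun x hx => by
    obtain ⟨c, rfl⟩ := Ideal.mem_span_singleton'.mp hx
    rw [map_mul, map_sub, laurentToLocalization_relation Φt a ha, sub_self, mul_zero]

def localizationToQuotient : L →ₐ[k] Q :=
  IsLocalization.liftAlgHom (isUnit_mk_polyToLaurent Φt a)

theorem quotientToLocalization_mk (ha : a (Fin.last n) = 0) (x : k[Fin (n + 1) → ℤ]) :
    quotientToLocalization Φt ha (Ideal.Quotient.mk _ x) = laurentToLocalization Φt a x :=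
  rfl

theorem localizationToQuotient_algebraMap (x : MvPolynomial (Fin n) k) :
    localizationToQuotient Φt a (algebraMap _ _ x) =
      Ideal.Quotient.mk (relationIdeal Φt a) (polyToLaurent k n x) :=
  IsLocalization.lift_eq _ _

theorem units_map_localizationToQuotient_unitOfMem (i : Fin n) :
    Units.map (localizationToQuotient Φt a : L →* Q)
        (Localization.unitOfMem (X_mem_genByVarsAnd Φt i)) =
      Units.map (Ideal.Quotient.mk (relationIdeal Φt a) : k[Fin (n + 1) → ℤ] →* Q)
        (laurentVar k i.castSucc) :=
  Units.ext <| by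
    simp [Localization.coe_unitOfMem, localizationToQuotient_algebraMap, polyToLaurent_X,
      laurentVar]

theorem quotientToLocalization_comp_localizationToQuotient (ha : a (Fin.last n) = 0) :
    (quotientToLocalization Φt ha).comp (localizationToQuotient Φt a) = AlgHom.id k L := by
  refine IsLocalization.algHom_ext (genByVarsAnd Φt) (AlgHom.ext fun x => ?_)
  change quotientToLocalization Φt ha (localizationToQuotient Φt a (algebraMap _ _ x)) = _
  rw [localizationToQuotient_algebraMap, quotientToLocalization_mk]
  exact AlgHom.congr_fun (laurentToLocalization_comp_polyToLaurent Φt a) x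

theorem localizationToQuotient_comp_quotientToLocalization (ha : a (Fin.last n) = 0) :
    (localizationToQuotient Φt a).comp (quotientToLocalization Φt ha) = AlgHom.id k Q := by
  refine Ideal.Quotient.algHom_ext _ (laurent_algHom_ext fun j => ?_)
  simp only [AlgHom.comp_apply, AlgHom.id_apply, Ideal.Quotient.mkₐ_eq_mk,
    quotientToLocalization_mk]
  refine Fin.lastCases ?_ (fun i => ?_) j
  · rw [laurentToLocalization_last, map_mul, localizationToQuotient_algebraMap,
      ← MonoidHom.coe_coe (localizationToQuotient Φt a), ← Units.coe_map, map_prod, mk_relation,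
      map_mul, mk_single_neg Φt a ha, mul_comm]
    simp only [map_zpow, units_map_localizationToQuotient_unitOfMem]
  · simp [laurentToLocalization, laurentLift_var, Localization.coe_unitOfMem,
      localizationToQuotient_algebraMap, polyToLaurent_X]

variable {a} in
def quotientAlgEquivLocalization (ha : a (Fin.last n) = 0) : Q ≃ₐ[k] L :=
  AlgEquiv.ofAlgHom (quotientToLocalization Φt ha) (localizationToQuotient Φt a)
    (quotientToLocalization_comp_localizationToQuotient Φt a ha)
    (localizationToQuotient_comp_quotientToLocalization Φt a ha)

end

end

/-- Write `Φ = X^{−a}·Φ̃` with `a ∈ ℕ^{d−1} × {0}` and `Φ̃` an ordinary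
polynomial in `𝔽_p[Y_1,…,Y_{d−1}]` not divisible by any variable.  Then
`R_d/⟨X_d − Φ⟩` is ring-isomorphic to the localization of `𝔽_p[Y_1,…,Y_{d−1}]` at the
multiplicative submonoid generated by `{Y_1,…,Y_{d−1}, Φ̃}`. -/
theorem quotient_iso_localization (p d : ℕ) (hd : 2 ≤ d)
    (Φ : AddMonoidAlgebra (ZMod p) (Fin d → ℤ))
    (a : Fin d → ℤ) (halast : a ⟨d - 1, by omega⟩ = 0)
    (Φt : MvPolynomial (Fin (d - 1)) (ZMod p))
    (hfact : Φ = AddMonoidAlgebra.single (-a) (1 : ZMod p) *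
      (show AddMonoidAlgebra (ZMod p) (Fin d → ℤ) from AddMonoidAlgebra.ofCoeff (
        Finsupp.mapDomain
          (fun (v : Fin (d - 1) →₀ ℕ) (i : Fin d) =>
            if h : (i : ℕ) < d - 1 then (v ⟨(i : ℕ), h⟩ : ℤ) else 0) (AddMonoidAlgebra.coeff Φt)))) :
    Nonempty
      ((AddMonoidAlgebra (ZMod p) (Fin d → ℤ) ⧸
          Ideal.span {(AddMonoidAlgebra.single
              (fun i : Fin d => if (i : ℕ) = d - 1 then (1 : ℤ) else 0) (1 : ZMod p)) - Φ}) ≃+*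
        Localization
          (Submonoid.closure
            (insert Φt (Set.range (MvPolynomial.X (R := ZMod p) (σ := Fin (d - 1))))))) := by
  obtain ⟨n, rfl⟩ : ∃ n, d = n + 1 := ⟨d - 1, by omega⟩
  have hlast : (fun i : Fin (n + 1) => if (i : ℕ) = n + 1 - 1 then (1 : ℤ) else 0) =
      Pi.single (Fin.last n) 1 := by
    ext i
    simp [Pi.single_apply, Fin.ext_iff]
  have hembed : (fun (v : Fin (n + 1 - 1) →₀ ℕ) (i : Fin (n + 1)) =>
      if h : (i : ℕ) < n + 1 - 1 then (v ⟨(i : ℕ), h⟩ : ℤ) else 0) = snocZeroExp := by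
    ext v i
    refine Fin.lastCases ?_ (fun i => ?_) i <;> simp [snocZeroExp]
  rw [hfact, hlast, hembed]
  exact ⟨(quotientAlgEquivLocalization Φt halast).toRingEquiv⟩
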